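/- Let a, b, c ∈ ℝ and let u : ℝ² → ℝ be a C² solution of Δu + a uₓ + b u_y + c u = 0 on all of ℝ² with u(0, y) = 0 for every y ∈ ℝ. Then for every (x₀, y₀) ∈ ℝ², u(x₀, y₀) = −e^{−a x₀} · u(−x₀, y₀). -/

import Mathlib

/-!
Multiplying `u` by `e^{(a x + b y)/2}` turns the equation into the Helmholtz equation
`Δm + κ m = 0` with `κ = c - (a² + b²)/4`, and the claim becomes: `m` is odd in `x`. The even
part `w(x, y) = m(x, y) + m(-x, y)` solves the same equation and vanishes on the line `x = 0`;
being even, its normal derivative vanishes there too, and then the equation forces its whole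
2-jet to vanish on the line. Hence `w`, cut off to the left half-plane, is still a `C²`
solution, one that vanishes on the right half-plane. Unique continuation finishes the proof: on
the circles around `(1, 0)` the Fourier modes of a solution satisfy Bessel's equation in the
radius, they vanish for radii `≤ 1`, hence for all radii by Grönwall, and a continuous function
with vanishing Fourier coefficients is zero.
-/

/-- Partial derivative with respect to the first variable. -/
noncomputable def pdx (u : ℝ × ℝ → ℝ) (p : ℝ × ℝ) : ℝ :=
  deriv (fun x : ℝ => u (x, p.2)) p.1

/-- Partial derivative with respect to the second variable. -/
noncomputable def pdy (u : ℝ × ℝ → ℝ) (p : ℝ × ℝ) : ℝ :=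
  deriv (fun y : ℝ => u (p.1, y)) p.2

open Real MeasureTheory Set

noncomputable def planeLaplacian (f : ℝ × ℝ → ℝ) (p : ℝ × ℝ) : ℝ :=
  fderiv ℝ (fderiv ℝ f) p (1, 0) (1, 0) + fderiv ℝ (fderiv ℝ f) p (0, 1) (0, 1)

section PartialDerivatives

variable {f : ℝ × ℝ → ℝ}

lemma pdx_eq_fderiv {p : ℝ × ℝ} (hf : DifferentiableAt ℝ f p) :
    pdx f p = fderiv ℝ f p (1, 0) :=
  (hf.hasFDerivAt.comp_hasDerivAt p.1
    ((hasDerivAt_id p.1).prodMk (hasDerivAt_const p.1 p.2))).deriv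

lemma pdy_eq_fderiv {p : ℝ × ℝ} (hf : DifferentiableAt ℝ f p) :
    pdy f p = fderiv ℝ f p (0, 1) :=
  (hf.hasFDerivAt.comp_hasDerivAt p.2
    ((hasDerivAt_const p.2 p.1).prodMk (hasDerivAt_id p.2))).deriv

lemma pdx_pdx_add_pdy_pdy (hf : ContDiff ℝ 2 f) (p : ℝ × ℝ) :
    pdx (pdx f) p + pdy (pdy f) p = planeLaplacian f p := by
  have hf1 : Differentiable ℝ f := hf.differentiable two_ne_zero
  have hf2 : Differentiable ℝ (fderiv ℝ f) :=
    (hf.fderiv_right (m := 1) le_rfl).differentiable one_ne_zero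
  have hx : pdx f = fun q => fderiv ℝ f q (1, 0) := funext fun q => pdx_eq_fderiv (hf1 q)
  have hy : pdy f = fun q => fderiv ℝ f q (0, 1) := funext fun q => pdy_eq_fderiv (hf1 q)
  have hc : ∀ v : ℝ × ℝ, DifferentiableAt ℝ (fun q => fderiv ℝ f q v) p :=
    fun v => (hf2 p).clm_apply (differentiableAt_const v)
  rw [hx, hy, pdx_eq_fderiv (hc _), pdy_eq_fderiv (hc _),
    fderiv_clm_apply (hf2 p) (differentiableAt_const _),
    fderiv_clm_apply (hf2 p) (differentiableAt_const _)]
  simp [planeLaplacian]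

lemma planeLaplacian_add {g : ℝ × ℝ → ℝ} (hf : ContDiff ℝ 2 f) (hg : ContDiff ℝ 2 g)
    (p : ℝ × ℝ) :
    planeLaplacian (fun q => f q + g q) p = planeLaplacian f p + planeLaplacian g p := by
  rw [show (fun q => f q + g q) = f + g from rfl]
  have h : ∀ h : ℝ × ℝ → ℝ, ∀ v : ℝ × ℝ,
      fderiv ℝ (fderiv ℝ h) p v v = iteratedFDeriv ℝ 2 h p ![v, v] := fun h v => by
    rw [iteratedFDeriv_two_apply]; rfl
  simp only [planeLaplacian, h, iteratedFDeriv_add_apply hf.contDiffAt hg.contDiffAt,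
    add_apply]
  ring

lemma planeLaplacian_comp_neg_fst (hf : ContDiff ℝ 2 f) (p : ℝ × ℝ) :
    planeLaplacian (fun q => f (-q.1, q.2)) p = planeLaplacian f (-p.1, p.2) := by
  have hσ : ContDiff ℝ 2 fun q : ℝ × ℝ => f (-q.1, q.2) :=
    hf.comp (by fun_prop : ContDiff ℝ 2 fun q : ℝ × ℝ => (-q.1, q.2))
  rw [← pdx_pdx_add_pdy_pdy hσ, ← pdx_pdx_add_pdy_pdy hf]
  congr 1
  show deriv (deriv fun x => f (-x, p.2)) p.1 = deriv (deriv fun x => f (x, p.2)) (-p.1)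
  have h : deriv (fun x => f (-x, p.2)) = fun x => -deriv (fun x => f (x, p.2)) (-x) :=
    funext (deriv_comp_neg fun x => f (x, p.2))
  rw [h, deriv.fun_neg, deriv_comp_neg, neg_neg]

end PartialDerivatives

lemma hasDerivAt_exp_mul {φ h : ℝ → ℝ} {k h' x : ℝ} (hφ : HasDerivAt φ k x)
    (hh : HasDerivAt h h' x) :
    HasDerivAt (fun t => exp (φ t) * h t) (exp (φ x) * (h' + k * h x)) x :=
  (hφ.exp.mul hh).congr_deriv (by ring)

lemma deriv_deriv_exp_mul {φ g : ℝ → ℝ} {k : ℝ} (hφ : ∀ t, HasDerivAt φ k t)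
    (hg : ContDiff ℝ 2 g) (x : ℝ) :
    deriv (deriv fun t => exp (φ t) * g t) x
      = exp (φ x) * (deriv (deriv g) x + 2 * k * deriv g x + k ^ 2 * g x) := by
  obtain ⟨hg1, -, hg'⟩ := contDiff_succ_iff_deriv (n := 1).1 hg
  have hg2 : Differentiable ℝ (deriv g) := hg'.differentiable one_ne_zero
  have h1 : deriv (fun t => exp (φ t) * g t) = fun t => exp (φ t) * (deriv g t + k * g t) :=
    funext fun t => (hasDerivAt_exp_mul (hφ t) (hg1 t).hasDerivAt).deriv
  rw [h1, (hasDerivAt_exp_mul (h := fun t => deriv g t + k * g t) (hφ x) ((hg2 x).hasDerivAt.add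
    ((hg1 x).hasDerivAt.const_mul k))).deriv]
  ring

lemma helmholtz_exp_mul {a b c : ℝ} {u : ℝ × ℝ → ℝ} (hu : ContDiff ℝ 2 u)
    (hueq : ∀ p : ℝ × ℝ,
      pdx (pdx u) p + pdy (pdy u) p + a * pdx u p + b * pdy u p + c * u p = 0)
    (p : ℝ × ℝ) :
    planeLaplacian (fun q => exp ((a * q.1 + b * q.2) / 2) * u q) p
      + (c - (a ^ 2 + b ^ 2) / 4) * (exp ((a * p.1 + b * p.2) / 2) * u p) = 0 := by
  have hm : ContDiff ℝ 2 fun q : ℝ × ℝ => exp ((a * q.1 + b * q.2) / 2) * u q := by fun_prop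
  have hxx : pdx (pdx fun q => exp ((a * q.1 + b * q.2) / 2) * u q) p
      = exp ((a * p.1 + b * p.2) / 2) * (pdx (pdx u) p + 2 * (a / 2) * pdx u p
        + (a / 2) ^ 2 * u p) :=
    deriv_deriv_exp_mul (φ := fun x => (a * x + b * p.2) / 2) (g := fun x => u (x, p.2))
      (fun t => by simpa using (((hasDerivAt_id t).const_mul a).add_const (b * p.2)).div_const 2)
      (hu.comp (by fun_prop)) p.1
  have hyy : pdy (pdy fun q => exp ((a * q.1 + b * q.2) / 2) * u q) p
      = exp ((a * p.1 + b * p.2) / 2) * (pdy (pdy u) p + 2 * (b / 2) * pdy u p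
        + (b / 2) ^ 2 * u p) :=
    deriv_deriv_exp_mul (φ := fun y => (a * p.1 + b * y) / 2) (g := fun y => u (p.1, y))
      (fun t => by simpa using (((hasDerivAt_id t).const_mul b).const_add (a * p.1)).div_const 2)
      (hu.comp (by fun_prop)) p.2
  rw [← pdx_pdx_add_pdy_pdy hm, hxx, hyy]
  linear_combination exp ((a * p.1 + b * p.2) / 2) * hueq p

/-- The interval `[-π, π]` is chosen because it contains the range of `Complex.arg`. -/
noncomputable def angularCoeff (g : ℝ → ℝ) (n : ℤ) : ℂ :=
  fourierCoeffOn (neg_lt_self pi_pos) (fun θ => (g θ : ℂ)) n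

lemma angularCoeff_eq_integral (g : ℝ → ℝ) (n : ℤ) :
    angularCoeff g n = (1 / (π - -π)) •
      ∫ θ in -π..π, fourier (-n) (θ : AddCircle (π - -π)) • (g θ : ℂ) :=
  fourierCoeffOn_eq_integral _ n _

lemma angularCoeff_add {g h : ℝ → ℝ} (hg : Continuous g) (hh : Continuous h) (n : ℤ) :
    angularCoeff (fun θ => g θ + h θ) n = angularCoeff g n + angularCoeff h n := by
  have hc : ∀ k : ℝ → ℝ, Continuous k →
      IntervalIntegrable (fun θ : ℝ => fourier (-n) (θ : AddCircle (π - -π)) • (k θ : ℂ))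
        volume (-π) π := fun k hk =>
    Continuous.intervalIntegrable (by fun_prop) _ _
  simp only [angularCoeff_eq_integral, Complex.ofReal_add, smul_add]
  rw [intervalIntegral.integral_add (hc g hg) (hc h hh), smul_add]

lemma angularCoeff_const_mul (c : ℝ) (g : ℝ → ℝ) (n : ℤ) :
    angularCoeff (fun θ => c * g θ) n = c * angularCoeff g n := by
  simp only [angularCoeff, Complex.ofReal_mul]
  exact fourierCoeffOn.const_mul _ _ _ _

lemma angularCoeff_sub {g h : ℝ → ℝ} (hg : Continuous g) (hh : Continuous h) (n : ℤ) :
    angularCoeff (fun θ => g θ - h θ) n = angularCoeff g n - angularCoeff h n := by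
  have := angularCoeff_add (h := fun θ => -1 * h θ) hg (continuous_const.mul hh) n
  rw [angularCoeff_const_mul] at this
  simpa [sub_eq_add_neg] using this

lemma angularCoeff_of_hasDerivAt {g g' : ℝ → ℝ} (hg : ∀ θ, HasDerivAt g (g' θ) θ)
    (hg' : Continuous g') (hper : g π = g (-π)) (n : ℤ) :
    angularCoeff g' n = n * Complex.I * angularCoeff g n := by
  have hd : ∀ θ ∈ uIcc (-π) π, HasDerivAt (fun t => (g t : ℂ)) (g' θ : ℂ) θ :=
    fun θ _ => (hg θ).ofReal_comp
  have hi : IntervalIntegrable (fun θ => (g' θ : ℂ)) volume (-π) π :=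
    (Complex.continuous_ofReal.comp hg').intervalIntegrable _ _
  rcases eq_or_ne n 0 with rfl | hn
  · simp only [angularCoeff_eq_integral, neg_zero, fourier_zero, one_smul,
      intervalIntegral.integral_eq_sub_of_hasDerivAt hd hi, hper, sub_self, smul_zero]
    simp
  · have h := fourierCoeffOn_of_hasDerivAt (neg_lt_self pi_pos) hn hd hi
    simp only [hper, sub_self, mul_zero, zero_sub] at h
    rw [angularCoeff, angularCoeff, h]
    have hπ : (π : ℂ) ≠ 0 := Complex.ofReal_ne_zero.2 pi_ne_zero
    have hn' : (n : ℂ) ≠ 0 := Int.cast_ne_zero.2 hn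
    field_simp
    push_cast
    ring

lemma eqOn_zero_of_angularCoeff_eq_zero {g : ℝ → ℝ} (hg : Continuous g)
    (h : ∀ n, angularCoeff g n = 0) : EqOn g 0 (Icc (-π) π) := by
  have hL2 : MemLp (fun θ => (g θ : ℂ)) 2 (volume.restrict (Ioc (-π) π)) := by
    have hc : Continuous fun θ => (g θ : ℂ) := Complex.continuous_ofReal.comp hg
    refine (memLp_two_iff_integrable_sq_norm hc.aestronglyMeasurable).2 ?_
    exact (hc.norm.pow 2).integrableOn_Ioc
  have hsum := hasSum_sq_fourierCoeffOn (neg_lt_self pi_pos) hL2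
  have h' : ∀ n, fourierCoeffOn (neg_lt_self pi_pos) (fun θ => (g θ : ℂ)) n = 0 := h
  simp only [h', norm_zero, ne_eq, OfNat.ofNat_ne_zero, not_false_eq_true,
    zero_pow] at hsum
  have hint : ∫ θ in -π..π, g θ ^ 2 = 0 := by
    have := hasSum_zero.unique hsum
    simp only [Complex.norm_real, norm_eq_abs, sq_abs] at this
    have hπ : (π - -π)⁻¹ ≠ 0 := by have := pi_pos; exact inv_ne_zero (by linarith)
    exact (smul_eq_zero.1 this.symm).resolve_left hπ
  intro θ hθ
  by_contra hne
  replace hne : g θ ≠ 0 := hne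
  have hlt := intervalIntegral.integral_lt_integral_of_continuousOn_of_le_of_exists_lt
    (neg_lt_self pi_pos) continuousOn_const (hg.pow 2).continuousOn
    (fun _ _ => sq_nonneg _) ⟨θ, hθ, by simpa using pow_pos (abs_pos.2 hne) 2⟩
  simp [hint] at hlt

lemma hasDerivAt_intervalIntegral_of_continuous {E : Type*} [NormedAddCommGroup E]
    [NormedSpace ℝ E] {F F' : ℝ → ℝ → E} (a b : ℝ) (hF : Continuous (Function.uncurry F))
    (hF' : Continuous (Function.uncurry F')) (hd : ∀ r θ, HasDerivAt (F · θ) (F' r θ) r)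
    (r : ℝ) :
    HasDerivAt (fun s => ∫ θ in a..b, F s θ) (∫ θ in a..b, F' r θ) r := by
  obtain ⟨M, hM⟩ := (isCompact_Icc.prod isCompact_uIcc).exists_bound_of_continuousOn
    (s := Icc (r - 1) (r + 1) ×ˢ uIcc a b) hF'.continuousOn
  have hFs : ∀ s, Continuous (F s) := fun s => hF.comp (Continuous.prodMk_right s)
  refine (intervalIntegral.hasDerivAt_integral_of_dominated_loc_of_deriv_le
    (bound := fun _ => M) (Metric.ball_mem_nhds r one_pos)
    (.of_forall fun s => (hFs s).aestronglyMeasurable) ((hFs r).intervalIntegrable _ _)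
    (hF'.comp (Continuous.prodMk_right r)).aestronglyMeasurable
    (.of_forall fun θ hθ s hs => hM (s, θ) ⟨?_, uIoc_subset_uIcc hθ⟩) intervalIntegrable_const
    (.of_forall fun θ _ s _ => hd s θ)).2
  rw [Metric.mem_ball, Real.dist_eq, abs_lt] at hs
  constructor <;> linarith [hs.1, hs.2]

lemma hasDerivAt_angularCoeff {g g' : ℝ → ℝ → ℝ} (hg : Continuous (Function.uncurry g))
    (hg' : Continuous (Function.uncurry g')) (hd : ∀ r θ, HasDerivAt (g · θ) (g' r θ) r)
    (n : ℤ) (r : ℝ) :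
    HasDerivAt (fun s => angularCoeff (g s) n) (angularCoeff (g' r) n) r := by
  have hk : Continuous fun q : ℝ × ℝ => fourier (-n) (q.2 : AddCircle (π - -π)) := by fun_prop
  simp only [angularCoeff_eq_integral]
  refine (hasDerivAt_intervalIntegral_of_continuous _ _ ?_ ?_
    (fun s θ => ((hd s θ).ofReal_comp).const_smul (fourier (-n) (θ : AddCircle (π - -π)))) r
    ).const_smul (1 / (π - -π) : ℝ)
  · exact hk.smul (Complex.continuous_ofReal.comp hg)
  · exact hk.smul (Complex.continuous_ofReal.comp hg')

lemma norm_le_of_radial_ode {E : Type*} [NormedAddCommGroup E] [NormedSpace ℝ E]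
    {A Q H : E} {κ μ r₀ s : ℝ} (hr₀ : 0 < r₀) (hs : r₀ ≤ s)
    (hode : s ^ 2 • H = (μ - κ * s ^ 2) • A - s • Q) :
    ‖(Q, H)‖ ≤ (|μ| / r₀ ^ 2 + |κ| + 1 / r₀ + 1) * ‖(A, Q)‖ := by
  have hs0 : 0 < s := hr₀.trans_le hs
  have hAX : ‖A‖ ≤ ‖(A, Q)‖ := norm_fst_le (A, Q)
  have hQX : ‖Q‖ ≤ ‖(A, Q)‖ := norm_snd_le (A, Q)
  have hH : H = (μ / s ^ 2 - κ) • A - s⁻¹ • Q := by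
    have h := congrArg ((s ^ 2)⁻¹ • ·) hode
    simp only [smul_smul, smul_sub] at h
    rw [inv_mul_cancel₀ (by positivity), one_smul] at h
    rw [h]
    congr 2
    · field_simp
    · field_simp
  have hcoef : |μ / s ^ 2 - κ| ≤ |μ| / r₀ ^ 2 + |κ| := by
    calc |μ / s ^ 2 - κ| ≤ |μ / s ^ 2| + |κ| := abs_sub _ _
      _ ≤ |μ| / r₀ ^ 2 + |κ| := by
        rw [abs_div, abs_of_pos (by positivity : 0 < s ^ 2)]
        gcongr
  have hinv : s⁻¹ ≤ 1 / r₀ := by rw [one_div]; exact inv_anti₀ hr₀ hs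
  have hXnn := norm_nonneg (A, Q)
  have hK : 0 ≤ |μ| / r₀ ^ 2 + |κ| + 1 / r₀ := by positivity
  rw [Prod.norm_def]
  refine max_le (hQX.trans (le_mul_of_one_le_left hXnn (by linarith))) ?_
  calc ‖H‖ ≤ |μ / s ^ 2 - κ| * ‖A‖ + s⁻¹ * ‖Q‖ := by
        rw [hH]
        refine (norm_sub_le _ _).trans ?_
        rw [norm_smul, norm_smul, Real.norm_eq_abs, Real.norm_eq_abs, abs_inv, abs_of_pos hs0]
    _ ≤ (|μ| / r₀ ^ 2 + |κ|) * ‖(A, Q)‖ + 1 / r₀ * ‖(A, Q)‖ := by gcongr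
    _ ≤ (|μ| / r₀ ^ 2 + |κ| + 1 / r₀ + 1) * ‖(A, Q)‖ := by nlinarith

lemma eq_zero_of_radial_ode {E : Type*} [NormedAddCommGroup E] [NormedSpace ℝ E]
    {A Q H : ℝ → E} {κ μ r₀ : ℝ} (hr₀ : 0 < r₀)
    (hA : ∀ r ≥ r₀, HasDerivAt A (Q r) r) (hQ : ∀ r ≥ r₀, HasDerivAt Q (H r) r)
    (hode : ∀ r ≥ r₀, r ^ 2 • H r = (μ - κ * r ^ 2) • A r - r • Q r)
    (hA₀ : A r₀ = 0) (hQ₀ : Q r₀ = 0) {r : ℝ} (hr : r₀ ≤ r) : A r = 0 := by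
  have hX : ∀ s ≥ r₀, HasDerivAt (fun t => (A t, Q t)) (Q s, H s) s :=
    fun s hs => (hA s hs).prodMk (hQ s hs)
  have h := eq_zero_of_abs_deriv_le_mul_abs_self_of_eq_zero_right (f := fun t => (A t, Q t))
    (fun s hs => (hX s hs.1).continuousAt.continuousWithinAt)
    (fun s hs => (hX s hs.1).hasDerivWithinAt) (Prod.ext hA₀ hQ₀)
    (fun s hs => norm_le_of_radial_ode hr₀ hs.1 (hode s hs.1)) r ⟨hr, le_rfl⟩
  exact congrArg Prod.fst h

noncomputable def radial (θ : ℝ) : ℝ × ℝ := (cos θ, sin θ)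

noncomputable def angular (θ : ℝ) : ℝ × ℝ := (-sin θ, cos θ)

@[fun_prop] lemma continuous_radial : Continuous radial := by unfold radial; fun_prop

@[fun_prop] lemma continuous_angular : Continuous angular := by unfold angular; fun_prop

lemma hasDerivAt_radial (θ : ℝ) : HasDerivAt radial (angular θ) θ :=
  (hasDerivAt_cos θ).prodMk (hasDerivAt_sin θ)

lemma hasDerivAt_angular (θ : ℝ) : HasDerivAt angular (-radial θ) θ := by
  show HasDerivAt (fun t => (-sin t, cos t)) _ θ
  simpa [radial] using (hasDerivAt_sin θ).neg.prodMk (hasDerivAt_cos θ)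

lemma radial_pi : radial π = radial (-π) := by simp [radial]

lemma angular_pi : angular π = angular (-π) := by simp [angular]

lemma apply_radial_add_apply_angular (B : ℝ × ℝ →L[ℝ] ℝ × ℝ →L[ℝ] ℝ) (θ : ℝ) :
    B (radial θ) (radial θ) + B (angular θ) (angular θ) = B (1, 0) (1, 0) + B (0, 1) (0, 1) := by
  have hr : radial θ = cos θ • ((1 : ℝ), (0 : ℝ)) + sin θ • ((0 : ℝ), (1 : ℝ)) := by
    ext <;> simp [radial]
  have ha : angular θ = (-sin θ) • ((1 : ℝ), (0 : ℝ)) + cos θ • ((0 : ℝ), (1 : ℝ)) := by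
    ext <;> simp [angular]
  rw [hr, ha]
  simp only [map_add, map_smul, add_apply, smul_apply, smul_eq_mul]
  linear_combination (B (1, 0) (1, 0) + B (0, 1) (0, 1)) * sin_sq_add_cos_sq θ

section CircleModes

variable {f : ℝ × ℝ → ℝ} (z : ℝ × ℝ) (n : ℤ)

lemma hasDerivAt_circle_radius (r θ : ℝ) :
    HasDerivAt (fun s : ℝ => z + s • radial θ) (radial θ) r := by
  simpa using ((hasDerivAt_id r).smul_const (radial θ)).const_add z

lemma hasDerivAt_circle_angle (r θ : ℝ) :
    HasDerivAt (fun t : ℝ => z + r • radial t) (r • angular θ) θ :=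
  ((hasDerivAt_radial θ).const_smul r).const_add z

lemma hasDerivAt_angularCoeff_comp_circle (hf : ContDiff ℝ 1 f) (r : ℝ) :
    HasDerivAt (fun s => angularCoeff (fun θ => f (z + s • radial θ)) n)
      (angularCoeff (fun θ => fderiv ℝ f (z + r • radial θ) (radial θ)) n) r := by
  have hfc := hf.continuous_fderiv one_ne_zero
  refine hasDerivAt_angularCoeff (g := fun s θ => f (z + s • radial θ))
    (g' := fun s θ => fderiv ℝ f (z + s • radial θ) (radial θ)) ?_ ?_ (fun s θ => ?_) n r
  · exact hf.continuous.comp (by fun_prop)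
  · fun_prop
  · exact ((hf.differentiable one_ne_zero _).hasFDerivAt).comp_hasDerivAt s
      (hasDerivAt_circle_radius z s θ)

lemma hasDerivAt_angularCoeff_fderiv_radial (hf : ContDiff ℝ 2 f) (r : ℝ) :
    HasDerivAt (fun s => angularCoeff (fun θ => fderiv ℝ f (z + s • radial θ) (radial θ)) n)
      (angularCoeff
        (fun θ => fderiv ℝ (fderiv ℝ f) (z + r • radial θ) (radial θ) (radial θ)) n) r := by
  have hf1 : ContDiff ℝ 1 (fderiv ℝ f) := hf.fderiv_right (m := 1) le_rfl
  have hfc := hf1.continuous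
  have hf2c := hf1.continuous_fderiv one_ne_zero
  refine hasDerivAt_angularCoeff (g := fun s θ => fderiv ℝ f (z + s • radial θ) (radial θ))
    (g' := fun s θ => fderiv ℝ (fderiv ℝ f) (z + s • radial θ) (radial θ) (radial θ))
    (by fun_prop) (by fun_prop) (fun s θ => ?_) n r
  simpa using (((hf1.differentiable one_ne_zero _).hasFDerivAt).comp_hasDerivAt s
    (hasDerivAt_circle_radius z s θ)).clm_apply (hasDerivAt_const s (radial θ))

lemma angularCoeff_fderiv_angular (hf : ContDiff ℝ 1 f) (r : ℝ) :
    r * angularCoeff (fun θ => fderiv ℝ f (z + r • radial θ) (angular θ)) n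
      = n * Complex.I * angularCoeff (fun θ => f (z + r • radial θ)) n := by
  have hfc := hf.continuous_fderiv one_ne_zero
  rw [← angularCoeff_const_mul]
  refine angularCoeff_of_hasDerivAt (fun θ => ?_) (by fun_prop) (by rw [radial_pi]) n
  simpa [Function.comp_def] using ((hf.differentiable one_ne_zero _).hasFDerivAt).comp_hasDerivAt θ
    (hasDerivAt_circle_angle z r θ)

lemma angularCoeff_fderiv_fderiv_angular (hf : ContDiff ℝ 2 f) (r : ℝ) :
    r * angularCoeff
        (fun θ => fderiv ℝ (fderiv ℝ f) (z + r • radial θ) (angular θ) (angular θ)) n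
      - angularCoeff (fun θ => fderiv ℝ f (z + r • radial θ) (radial θ)) n
      = n * Complex.I * angularCoeff (fun θ => fderiv ℝ f (z + r • radial θ) (angular θ)) n := by
  have hf1 : ContDiff ℝ 1 (fderiv ℝ f) := hf.fderiv_right (m := 1) le_rfl
  have hfc := hf1.continuous
  have hf2c := hf1.continuous_fderiv one_ne_zero
  rw [← angularCoeff_const_mul, ← angularCoeff_sub (by fun_prop) (by fun_prop)]
  refine angularCoeff_of_hasDerivAt (fun θ => ?_) (by fun_prop) (by rw [radial_pi, angular_pi]) n
  have h := (((hf1.differentiable one_ne_zero _).hasFDerivAt).comp_hasDerivAt θ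
    (hasDerivAt_circle_angle z r θ)).clm_apply (hasDerivAt_angular θ)
  simp only [Function.comp_def, map_smul, map_neg, smul_apply, smul_eq_mul] at h
  exact h.congr_deriv (sub_eq_add_neg _ _).symm

lemma angularCoeff_fderiv_fderiv_radial_add_angular (hf : ContDiff ℝ 2 f) (r : ℝ) :
    angularCoeff (fun θ => fderiv ℝ (fderiv ℝ f) (z + r • radial θ) (radial θ) (radial θ)) n
      + angularCoeff
        (fun θ => fderiv ℝ (fderiv ℝ f) (z + r • radial θ) (angular θ) (angular θ)) n
      = angularCoeff (fun θ => planeLaplacian f (z + r • radial θ)) n := by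
  have hf2c := (hf.fderiv_right (m := 1) le_rfl).continuous_fderiv one_ne_zero
  rw [← angularCoeff_add (by fun_prop) (by fun_prop)]
  simp only [apply_radial_add_apply_angular, planeLaplacian]

/-- Bessel's equation for the Fourier modes of a solution of `Δf + κ f = 0` on the circles
around `z`. -/
lemma radial_ode_angularCoeff {κ : ℝ} (hf : ContDiff ℝ 2 f)
    (heq : ∀ p, planeLaplacian f p + κ * f p = 0) (r : ℝ) :
    r ^ 2 • angularCoeff
        (fun θ => fderiv ℝ (fderiv ℝ f) (z + r • radial θ) (radial θ) (radial θ)) n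
      = ((n : ℝ) ^ 2 - κ * r ^ 2) • angularCoeff (fun θ => f (z + r • radial θ)) n
        - r • angularCoeff (fun θ => fderiv ℝ f (z + r • radial θ) (radial θ)) n := by
  have hΔ : angularCoeff (fun θ => planeLaplacian f (z + r • radial θ)) n
      = -κ * angularCoeff (fun θ => f (z + r • radial θ)) n := by
    rw [← Complex.ofReal_neg, ← angularCoeff_const_mul]
    congr 1
    ext θ
    linarith [heq (z + r • radial θ)]
  have h1 := angularCoeff_fderiv_angular z n (hf.of_le one_le_two) r
  have h2 := angularCoeff_fderiv_fderiv_angular z n hf r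
  have h3 := angularCoeff_fderiv_fderiv_radial_add_angular z n hf r
  simp only [Complex.real_smul]
  push_cast
  linear_combination (r : ℂ) ^ 2 * h3 - r * h2 - n * Complex.I * h1 + (r : ℂ) ^ 2 * hΔ
    - (n : ℂ) ^ 2 * angularCoeff (fun θ => f (z + r • radial θ)) n * Complex.I_sq

end CircleModes

lemma exists_radial_eq (z p : ℝ × ℝ) :
    ∃ r ≥ (0 : ℝ), ∃ θ ∈ Icc (-π) π, z + r • radial θ = p := by
  set w : ℂ := ⟨p.1 - z.1, p.2 - z.2⟩
  refine ⟨‖w‖, norm_nonneg w, w.arg, ⟨(Complex.neg_pi_lt_arg w).le, Complex.arg_le_pi w⟩, ?_⟩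
  ext
  · simp [radial, Complex.norm_mul_cos_arg, w]
  · simp [radial, Complex.norm_mul_sin_arg, w]

lemma fst_one_zero_add_smul_radial_nonneg {s : ℝ} (hs : |s| ≤ 1) (θ : ℝ) :
    0 ≤ (((1 : ℝ), (0 : ℝ)) + s • radial θ).1 := by
  have hle : |s * cos θ| ≤ 1 := by
    rw [abs_mul]
    exact mul_le_one₀ hs (abs_nonneg _) (abs_cos_le_one θ)
  simp only [radial, Prod.fst_add, Prod.smul_fst, smul_eq_mul]
  linarith [neg_abs_le (s * cos θ)]

theorem eq_zero_of_helmholtz_of_eq_zero_of_nonneg {f : ℝ × ℝ → ℝ} {κ : ℝ} (hf : ContDiff ℝ 2 f)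
    (heq : ∀ p, planeLaplacian f p + κ * f p = 0) (hzero : ∀ p : ℝ × ℝ, 0 ≤ p.1 → f p = 0)
    (p : ℝ × ℝ) : f p = 0 := by
  set z : ℝ × ℝ := (1, 0)
  have hA : ∀ n : ℤ, ∀ r ≥ (0 : ℝ), angularCoeff (fun θ => f (z + r • radial θ)) n = 0 := by
    intro n
    set A := fun s : ℝ => angularCoeff (fun θ => f (z + s • radial θ)) n
    set Q := fun s : ℝ => angularCoeff (fun θ => fderiv ℝ f (z + s • radial θ) (radial θ)) n
    have hA' : ∀ s, HasDerivAt A (Q s) s :=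
      hasDerivAt_angularCoeff_comp_circle z n (hf.of_le one_le_two)
    have hsmall : ∀ s, |s| ≤ 1 → A s = 0 := by
      intro s hs
      have hvanish : (fun θ => f (z + s • radial θ)) = fun θ => (0 : ℝ) * f (z + s • radial θ) :=
        funext fun θ => by rw [zero_mul, hzero _ (fst_one_zero_add_smul_radial_nonneg hs θ)]
      show angularCoeff _ n = 0
      rw [hvanish, angularCoeff_const_mul, Complex.ofReal_zero, zero_mul]
    have hA_half : A =ᶠ[nhds (1 / 2)] fun _ => 0 := by
      filter_upwards [Icc_mem_nhds (by norm_num : (-1 : ℝ) < 1 / 2) (by norm_num : (1 / 2 : ℝ) < 1)]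
        with s hs
      exact hsmall s (abs_le.2 hs)
    -- `A` vanishes on a neighbourhood of `1 / 2`, so the ODE starts there with zero data
    have hQ_half : Q (1 / 2) = 0 :=
      (hA' (1 / 2)).unique ((hasDerivAt_const _ _).congr_of_eventuallyEq hA_half)
    intro r hr
    rcases le_total r (1 / 2) with hr' | hr'
    · exact hsmall r (abs_le.2 ⟨by linarith, by linarith⟩)
    · exact eq_zero_of_radial_ode (by norm_num : (0 : ℝ) < 1 / 2) (fun s _ => hA' s)
        (fun s _ => hasDerivAt_angularCoeff_fderiv_radial z n hf s)
        (fun s _ => radial_ode_angularCoeff z n hf heq s) (hsmall _ (by norm_num)) hQ_half hr'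
  obtain ⟨r, hr, θ, hθ, rfl⟩ := exists_radial_eq z p
  exact eqOn_zero_of_angularCoeff_eq_zero (hf.continuous.comp (by fun_prop))
    (fun n => hA n r hr) hθ

def leftHalfPlane : Set (ℝ × ℝ) := {p | p.1 < 0}

lemma isOpen_leftHalfPlane : IsOpen leftHalfPlane := isOpen_lt continuous_fst continuous_const

lemma frontier_leftHalfPlane_subset : frontier leftHalfPlane ⊆ {p | p.1 = 0} :=
  frontier_lt_subset_eq continuous_fst continuous_const

lemma continuous_indicator_leftHalfPlane {M : Type*} [TopologicalSpace M] [Zero M]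
    {F : ℝ × ℝ → M} (hF : Continuous F) (h0 : ∀ y, F (0, y) = 0) :
    Continuous (leftHalfPlane.indicator F) := by
  classical
  rw [← Set.piecewise_eq_indicator]
  refine hF.piecewise (fun p hp => ?_) continuous_const
  rw [show p = (0, p.2) from Prod.ext (frontier_leftHalfPlane_subset hp) rfl, h0]
  rfl

section Gluing

variable {E : Type*} [NormedAddCommGroup E] [NormedSpace ℝ E]

lemma hasFDerivAt_indicator_leftHalfPlane {F : ℝ × ℝ → E} {F' : ℝ × ℝ → ℝ × ℝ →L[ℝ] E}
    (hF : ∀ p, HasFDerivAt F (F' p) p) (h0 : ∀ y, F (0, y) = 0) (h0' : ∀ y, F' (0, y) = 0)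
    (p : ℝ × ℝ) :
    HasFDerivAt (leftHalfPlane.indicator F) (leftHalfPlane.indicator F' p) p := by
  rcases lt_trichotomy p.1 0 with hp | hp | hp
  · rw [Set.indicator_of_mem (show p ∈ leftHalfPlane from hp)]
    refine (hF p).congr_of_eventuallyEq ?_
    filter_upwards [isOpen_leftHalfPlane.mem_nhds hp] with q hq
    exact Set.indicator_of_mem hq F
  · have hp' : p = (0, p.2) := Prod.ext hp rfl
    have hpl : p ∉ leftHalfPlane := hp.not_lt
    -- `‖indicator F‖ ≤ ‖F‖`, and `F = o(q - p)` since its value and derivative vanish at `p`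
    have hFp := (hF p).isLittleO
    rw [hp', h0, h0', ← hp'] at hFp
    rw [Set.indicator_of_notMem hpl]
    refine HasFDerivAt.of_isLittleO ?_
    simp only [Set.indicator_of_notMem hpl, sub_zero, zero_apply] at hFp ⊢
    exact (Asymptotics.isBigO_of_le _ fun q => norm_indicator_le_norm_self F q).trans_isLittleO
      hFp
  · rw [Set.indicator_of_notMem (show p ∉ leftHalfPlane from hp.le.not_gt)]
    refine (hasFDerivAt_const 0 p).congr_of_eventuallyEq ?_
    filter_upwards [isOpen_lt continuous_const continuous_fst |>.mem_nhds hp] with q hq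
    exact Set.indicator_of_notMem (show q ∉ leftHalfPlane from (le_of_lt hq).not_gt) F

lemma fderiv_indicator_leftHalfPlane {F : ℝ × ℝ → E} (hF : Differentiable ℝ F)
    (h0 : ∀ y, F (0, y) = 0) (h0' : ∀ y, fderiv ℝ F (0, y) = 0) :
    fderiv ℝ (leftHalfPlane.indicator F) = leftHalfPlane.indicator (fderiv ℝ F) :=
  funext fun p =>
    (hasFDerivAt_indicator_leftHalfPlane (fun q => (hF q).hasFDerivAt) h0 h0' p).fderiv

lemma contDiff_indicator_leftHalfPlane {F : ℝ × ℝ → E} (hF : ContDiff ℝ 2 F)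
    (h0 : ∀ y, F (0, y) = 0) (h1 : ∀ y, fderiv ℝ F (0, y) = 0)
    (h2 : ∀ y, fderiv ℝ (fderiv ℝ F) (0, y) = 0) :
    ContDiff ℝ 2 (leftHalfPlane.indicator F) := by
  have hF1 : ContDiff ℝ 1 (fderiv ℝ F) := hF.fderiv_right (m := 1) le_rfl
  refine contDiff_succ_iff_hasFDerivAt.2 ⟨_, ?_, hasFDerivAt_indicator_leftHalfPlane
    (fun p => (hF.differentiable two_ne_zero p).hasFDerivAt) h0 h1⟩
  refine contDiff_succ_iff_hasFDerivAt.2 ⟨_, ?_, hasFDerivAt_indicator_leftHalfPlane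
    (fun p => (hF1.differentiable one_ne_zero p).hasFDerivAt) h1 h2⟩
  exact contDiff_zero.2
    (continuous_indicator_leftHalfPlane (hF1.continuous_fderiv one_ne_zero) h2)

end Gluing

lemma planeLaplacian_indicator_leftHalfPlane {f : ℝ × ℝ → ℝ} (hf : ContDiff ℝ 2 f)
    (h0 : ∀ y, f (0, y) = 0) (h1 : ∀ y, fderiv ℝ f (0, y) = 0)
    (h2 : ∀ y, fderiv ℝ (fderiv ℝ f) (0, y) = 0) (p : ℝ × ℝ) :
    planeLaplacian (leftHalfPlane.indicator f) p
      = leftHalfPlane.indicator (planeLaplacian f) p := by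
  have hf1 : ContDiff ℝ 1 (fderiv ℝ f) := hf.fderiv_right (m := 1) le_rfl
  rw [planeLaplacian, fderiv_indicator_leftHalfPlane (hf.differentiable two_ne_zero) h0 h1,
    fderiv_indicator_leftHalfPlane (hf1.differentiable one_ne_zero) h1 h2]
  by_cases hp : p ∈ leftHalfPlane
  · simp only [Set.indicator_of_mem hp, planeLaplacian]
  · simp only [Set.indicator_of_notMem hp, zero_apply, add_zero]

section Jets

variable {E : Type*} [NormedAddCommGroup E] [NormedSpace ℝ E]

lemma ContinuousLinearMap.eq_zero_of_apply_one_zero_of_apply_zero_one (L : ℝ × ℝ →L[ℝ] E)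
    (h₁ : L (1, 0) = 0) (h₂ : L (0, 1) = 0) : L = 0 :=
  prod_ext (ext_ring (by simpa using h₁)) (ext_ring (by simpa using h₂))

lemma fderiv_apply_zero_one_eq_zero {F : ℝ × ℝ → E} {y : ℝ} (hF : DifferentiableAt ℝ F (0, y))
    (h0 : ∀ t, F (0, t) = 0) : fderiv ℝ F (0, y) (0, 1) = 0 := by
  have h := hF.hasFDerivAt.comp_hasDerivAt y ((hasDerivAt_const y (0 : ℝ)).prodMk (hasDerivAt_id y))
  simp only [Function.comp_def, h0] at h
  exact h.unique (hasDerivAt_const y 0)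

lemma fderiv_apply_one_zero_eq_zero {F : ℝ × ℝ → E} {y : ℝ} (hF : DifferentiableAt ℝ F (0, y))
    (heven : ∀ x, F (-x, y) = F (x, y)) : fderiv ℝ F (0, y) (1, 0) = 0 := by
  have h := (hF.hasFDerivAt.comp_hasDerivAt 0 ((hasDerivAt_id (0 : ℝ)).prodMk
    (hasDerivAt_const (0 : ℝ) y)))
  have hF' : HasFDerivAt F (fderiv ℝ F (0, y)) (-(0 : ℝ), y) := by
    rw [neg_zero]; exact hF.hasFDerivAt
  have hneg := hF'.comp_hasDerivAt 0 ((hasDerivAt_neg (0 : ℝ)).prodMk (hasDerivAt_const (0 : ℝ) y))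
  simp only [Function.comp_def, id, heven] at h hneg
  have h2 : (2 : ℝ) • fderiv ℝ F (0, y) (1, 0) = 0 := by
    rw [two_smul]
    nth_rewrite 2 [h.unique hneg]
    rw [show ((-1 : ℝ), (0 : ℝ)) = -((1 : ℝ), (0 : ℝ)) by simp, map_neg, add_neg_cancel]
  exact (smul_eq_zero.1 h2).resolve_left two_ne_zero

end Jets

section EvenSolutions

variable {w : ℝ × ℝ → ℝ}

lemma fderiv_eq_zero_of_even (hw : Differentiable ℝ w) (heven : ∀ p, w (-p.1, p.2) = w p)
    (h0 : ∀ y, w (0, y) = 0) (y : ℝ) : fderiv ℝ w (0, y) = 0 :=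
  (fderiv ℝ w (0, y)).eq_zero_of_apply_one_zero_of_apply_zero_one
    (fderiv_apply_one_zero_eq_zero (hw _) fun x => heven (x, y))
    (fderiv_apply_zero_one_eq_zero (hw _) h0)

lemma fderiv_fderiv_eq_zero_of_even {κ : ℝ} (hw : ContDiff ℝ 2 w)
    (heven : ∀ p, w (-p.1, p.2) = w p) (h0 : ∀ y, w (0, y) = 0)
    (heq : ∀ p, planeLaplacian w p + κ * w p = 0) (y : ℝ) :
    fderiv ℝ (fderiv ℝ w) (0, y) = 0 := by
  have hw1 : Differentiable ℝ (fderiv ℝ w) :=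
    (hw.fderiv_right (m := 1) le_rfl).differentiable one_ne_zero
  set B := fderiv ℝ (fderiv ℝ w) (0, y)
  have hB₂ : B (0, 1) = 0 := fderiv_apply_zero_one_eq_zero (hw1 _)
    (fderiv_eq_zero_of_even (hw.differentiable two_ne_zero) heven h0)
  have hsymm : B (1, 0) (0, 1) = B (0, 1) (1, 0) :=
    hw.contDiffAt.isSymmSndFDerivAt (by simp [minSmoothness_of_isRCLikeNormedField]) _ _
  have hB₁₁ : B (1, 0) (1, 0) = 0 := by
    have := heq (0, y)
    rw [planeLaplacian, h0, hB₂] at this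
    simpa using this
  refine B.eq_zero_of_apply_one_zero_of_apply_zero_one ?_ hB₂
  exact (B (1, 0)).eq_zero_of_apply_one_zero_of_apply_zero_one hB₁₁ (by rw [hsymm, hB₂]; rfl)

theorem eq_zero_of_even_of_helmholtz {κ : ℝ} (hw : ContDiff ℝ 2 w)
    (heven : ∀ p, w (-p.1, p.2) = w p) (h0 : ∀ y, w (0, y) = 0)
    (heq : ∀ p, planeLaplacian w p + κ * w p = 0) (p : ℝ × ℝ) : w p = 0 := by
  have h1 := fderiv_eq_zero_of_even (hw.differentiable two_ne_zero) heven h0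
  have h2 := fderiv_fderiv_eq_zero_of_even hw heven h0 heq
  have hleft : ∀ q : ℝ × ℝ, q.1 < 0 → w q = 0 := by
    intro q hq
    have := eq_zero_of_helmholtz_of_eq_zero_of_nonneg (κ := κ)
      (contDiff_indicator_leftHalfPlane hw h0 h1 h2)
      (fun p => by
        rw [planeLaplacian_indicator_leftHalfPlane hw h0 h1 h2]
        by_cases hp : p ∈ leftHalfPlane
        · simp only [Set.indicator_of_mem hp, heq p]
        · simp only [Set.indicator_of_notMem hp, mul_zero, add_zero])
      (fun p hp => Set.indicator_of_notMem (show p ∉ leftHalfPlane from hp.not_gt) w) q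
    rwa [Set.indicator_of_mem (show q ∈ leftHalfPlane from hq)] at this
  rcases lt_trichotomy p.1 0 with hp | hp | hp
  · exact hleft p hp
  · rw [show p = (0, p.2) from Prod.ext hp rfl, h0]
  · rw [← heven]
    exact hleft _ (neg_lt_zero.2 hp)

end EvenSolutions

/-- Point-to-point reflection across the line `x = 0` for solutions of
`Δu + a uₓ + b u_y + c u = 0` vanishing on that line. -/
theorem reflection_across_y_axis
    (a b c : ℝ)
    (u : ℝ × ℝ → ℝ) (hu : ContDiff ℝ 2 u)
    (hueq : ∀ p : ℝ × ℝ,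
      pdx (pdx u) p + pdy (pdy u) p + a * pdx u p + b * pdy u p + c * u p = 0)
    (huΓ : ∀ y : ℝ, u (0, y) = 0) :
    ∀ x₀ y₀ : ℝ, u (x₀, y₀) = -Real.exp (-a * x₀) * u (-x₀, y₀) := by
  intro x₀ y₀
  set m : ℝ × ℝ → ℝ := fun q => exp ((a * q.1 + b * q.2) / 2) * u q
  have hm : ContDiff ℝ 2 m := by fun_prop
  have hmσ : ContDiff ℝ 2 fun q : ℝ × ℝ => m (-q.1, q.2) :=
    hm.comp (by fun_prop : ContDiff ℝ 2 fun q : ℝ × ℝ => (-q.1, q.2))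
  have hodd : ∀ p : ℝ × ℝ, m p + m (-p.1, p.2) = 0 :=
    eq_zero_of_even_of_helmholtz (κ := c - (a ^ 2 + b ^ 2) / 4) (hm.add hmσ)
      (fun p => by simp [add_comm]) (fun y => by simp [m, huΓ]) (fun p => by
        rw [planeLaplacian_add hm hmσ, planeLaplacian_comp_neg_fst hm]
        linear_combination helmholtz_exp_mul hu hueq p + helmholtz_exp_mul hu hueq (-p.1, p.2))
  have hsplit : exp ((a * -x₀ + b * y₀) / 2) = exp (-a * x₀) * exp ((a * x₀ + b * y₀) / 2) := by
    rw [← exp_add]; ring_nf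
  have h := hodd (x₀, y₀)
  simp only [m, hsplit] at h
  refine mul_left_cancel₀ (exp_pos ((a * x₀ + b * y₀) / 2)).ne' ?_
  linear_combination h
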